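/- arXiv:1508.07185 — 3 statements merged into one kernel-verified Lean document; each statement's English description precedes it below -/
import Mathlib

section
/- Let γ_1, γ_2 ∈ ℂ and ξ_1, ξ_2 ∈ ℂ∖{1}. Then for all k, l ∈ ℕ₀: ℬ(k, l; ξ_1, ξ_2; γ_1, γ_2) = Σ_{j=0}^{l} C(l,j)·ℬ_{k+j}(ξ_1)·ℬ_{l−j}(ξ_2)·γ_1^{k+j}·γ_2^{l−j}, where C(l,j) denotes the binomial coefficient. -/
/-- The twisted Bernoulli numbers `ℬ_n(ξ)`, defined by
`1/(1 - ξ·exp t) = Σ_{n≥0} ℬ_n(ξ) tⁿ/n!` in `ℂ[[t]]`. -/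
noncomputable def twistedBernoulli (ξ : ℂ) (n : ℕ) : ℂ :=
  (Nat.factorial n : ℂ) *
    PowerSeries.coeff (R := ℂ) n (1 - PowerSeries.C (R := ℂ) ξ * PowerSeries.exp ℂ)⁻¹

/-- The power series `exp(γ (t_j + ⋯ + t_r)) = Σ_{m≥0} γ^m (t_j+⋯+t_r)^m / m!`
in `ℂ[[t_1,…,t_r]]`, defined coefficientwise (the `m`-th summand is homogeneous of
degree `m`, so only `m = |d|` contributes to the coefficient at a monomial `d`). -/
noncomputable def expShift (r : ℕ) (j : Fin r) (γ : ℂ) : MvPowerSeries (Fin r) ℂ :=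
  fun d =>
    (γ ^ (d.sum fun _ e => e) / (Nat.factorial (d.sum fun _ e => e) : ℂ)) *
      MvPowerSeries.coeff (R := ℂ) d
        ((∑ k ∈ Finset.univ.filter fun k => j ≤ k, MvPowerSeries.X k) ^ (d.sum fun _ e => e))

/-- The twisted multiple Bernoulli numbers `ℬ(n_1,…,n_r; ξ_1,…,ξ_r; γ_1,…,γ_r)`,
defined by `∏_{j=1}^r (1 − ξ_j·exp(γ_j(t_j+⋯+t_r)))⁻¹
  = Σ_n ℬ(n;ξ;γ) t_1^{n_1}⋯t_r^{n_r}/(n_1!⋯n_r!)` in `ℂ[[t_1,…,t_r]]`. -/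
noncomputable def multipleTwistedBernoulli (r : ℕ) (ξ γ : Fin r → ℂ) (n : Fin r → ℕ) : ℂ :=
  (∏ j, (Nat.factorial (n j) : ℂ)) *
    MvPowerSeries.coeff (R := ℂ) (Finsupp.equivFunOnFinite.symm n)
      (∏ j, (1 - MvPowerSeries.C (σ := Fin r) (R := ℂ) (ξ j) * expShift r j (γ j))⁻¹)

/-! With `g_ξ = (1 - ξ eᵗ)⁻¹`, the `j`-th factor of the generating function is
`g_ξⱼ(γⱼ (tⱼ + ⋯ + t_r))`: it is the image of the unit `1 - ξⱼ eᵗ` under the ring homomorphism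
"rescale by `γⱼ`, then substitute the linear form `tⱼ + ⋯ + t_r`", and ring homomorphisms
preserve inverses. For `r = 2` the generating function is `g_ξ₁(γ₁ (t₁ + t₂)) · g_ξ₂(γ₂ t₂)`.
Extracting the coefficient of `t₁ᵏ t₂ˡ` splits `t₂ˡ` as `t₂ʲ · t₂ˡ⁻ʲ` between the two
factors, and `t₁ᵏ t₂ʲ` occurs in `(t₁ + t₂)ᵏ⁺ʲ` with multiplicity `C(k + j, k)`. -/

open Finset PowerSeries

theorem Nat.factorial_mul_factorial_mul_choose_add {k l j : ℕ} (hj : j ≤ l) :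
    k.factorial * l.factorial * (k + j).choose k =
      l.choose j * (k + j).factorial * (l - j).factorial := by
  rw [← Nat.choose_mul_factorial_mul_factorial hj, ← Nat.add_choose_mul_factorial_mul_factorial k j,
    Nat.choose_symm_add]
  ring

theorem MvPowerSeries.inv_map_eq_of_mul_eq_one {A σ k F : Type*} [CommMonoid A] [Field k]
    [FunLike F A (MvPowerSeries σ k)] [MonoidHomClass F A (MvPowerSeries σ k)] (φ : F)
    {f g : A} (h : f * g = 1) : (φ f)⁻¹ = φ g := by
  have hφ : φ g * φ f = 1 := by rw [← map_mul, mul_comm, h, map_one]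
  refine (MvPowerSeries.inv_eq_iff_mul_eq_one ?_).mpr hφ
  exact right_ne_zero_of_mul_eq_one (by rw [← map_mul, hφ, map_one])

theorem MvPowerSeries.coeff_sum_X_pow_of_degree_ne {σ R : Type*} [CommSemiring R]
    (S : Finset σ) {n : ℕ} {d : σ →₀ ℕ} (hd : d.degree ≠ n) :
    coeff d ((∑ k ∈ S, X k) ^ n : MvPowerSeries σ R) = 0 := by
  have hS : ((∑ k ∈ S, MvPolynomial.X k : MvPolynomial σ R) : MvPowerSeries σ R) =
      ∑ k ∈ S, X k := by
    rw [← MvPolynomial.coeToMvPowerSeries.ringHom_apply, map_sum]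
    simp [MvPolynomial.coeToMvPowerSeries.ringHom_apply]
  rw [← hS, ← MvPolynomial.coe_pow, MvPolynomial.coeff_coe]
  have hom := (MvPolynomial.IsHomogeneous.sum S _ 1
    fun k _ => MvPolynomial.isHomogeneous_X R k).pow n
  exact hom.coeff_eq_zero (by simpa using hd)

theorem PowerSeries.HasSubst.sum_X {σ R : Type*} [CommRing R] (S : Finset σ) :
    HasSubst (∑ k ∈ S, MvPowerSeries.X k : MvPowerSeries σ R) :=
  HasSubst.of_constantCoeff_zero (by simp)

theorem MvPowerSeries.coeff_mul_subst_X {σ R : Type*} [CommRing R] [DecidableEq σ]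
    (f : MvPowerSeries σ R) (g : R⟦X⟧) (i : σ) (e : σ →₀ ℕ) :
    coeff e (f * g.subst (X i)) =
      ∑ j ∈ range (e i + 1), coeff (e.update i j) f * PowerSeries.coeff (e i - j) g := by
  rw [coeff_mul, eq_comm]
  refine sum_of_injOn (fun j => (e.update i j, Finsupp.single i (e i - j))) ?_ ?_ ?_ ?_
  · intro j _ j' _ h
    simpa using congrArg (fun p => p.1 i) h
  · intro j hj
    rw [coe_range, Set.mem_Iio] at hj
    rw [mem_coe, HasAntidiagonal.mem_antidiagonal]
    ext x
    rcases eq_or_ne x i with rfl | hx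
    · simp; omega
    · simp [hx]
  · rintro ⟨p, q⟩ hpq hnot
    rw [HasAntidiagonal.mem_antidiagonal] at hpq
    dsimp only at hpq ⊢
    rw [coeff_subst_single]
    split_ifs with hq
    · have hsum (x : σ) : p x + q x = e x := by rw [← hpq, Finsupp.add_apply]
      have hq0 (x : σ) (hx : x ≠ i) : q x = 0 := by
        rw [hq, Finsupp.single_apply, if_neg (Ne.symm hx)]
      have hqe : q i ≤ e i := by rw [← hsum i]; exact Nat.le_add_left _ _
      refine absurd ⟨e i - q i, by simp, Prod.ext ?_ ?_⟩ hnot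
      · ext x
        rcases eq_or_ne x i with rfl | hx
        · simp [← hsum x]
        · simp [hx, ← hsum x, hq0 x hx]
      · dsimp only
        rw [Nat.sub_sub_self hqe]
        exact hq.symm
    · exact mul_zero _
  · intro j _
    simp [coeff_subst_single]

theorem coeff_subst_X_zero_add_X_one_mul_subst_X_one {R : Type*} [CommRing R] (f g : R⟦X⟧)
    (k l : ℕ) :
    MvPowerSeries.coeff (Finsupp.equivFunOnFinite.symm ![k, l])
        (f.subst (MvPowerSeries.X 0 + MvPowerSeries.X 1) * g.subst (MvPowerSeries.X (1 : Fin 2))) =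
      ∑ j ∈ range (l + 1), ((k + j).choose k : R) * coeff (k + j) f * coeff (l - j) g := by
  rw [MvPowerSeries.coeff_mul_subst_X]
  refine sum_congr rfl fun j _ => ?_
  rw [coeff_subst_X_zero_add_X_one]
  simp

theorem expShift_eq_subst (r : ℕ) (j : Fin r) (γ : ℂ) :
    expShift r j γ =
      (rescale γ (exp ℂ)).subst (∑ k ∈ univ.filter (j ≤ ·), MvPowerSeries.X k) := by
  ext d
  change γ ^ d.degree / (d.degree.factorial : ℂ) * MvPowerSeries.coeff d (_ ^ d.degree) = _
  rw [coeff_subst (HasSubst.sum_X _), finsum_eq_single _ d.degree fun n hn => by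
    rw [MvPowerSeries.coeff_sum_X_pow_of_degree_ne _ (Ne.symm hn), smul_zero]]
  rw [coeff_rescale, coeff_exp, smul_eq_mul]
  simp [div_eq_mul_inv]

theorem inv_one_sub_C_mul_expShift (r : ℕ) (j : Fin r) {ξ : ℂ} (hξ : ξ ≠ 1) (γ : ℂ) :
    (1 - MvPowerSeries.C ξ * expShift r j γ)⁻¹ =
      (rescale γ (1 - C ξ * exp ℂ)⁻¹).subst (∑ k ∈ univ.filter (j ≤ ·), MvPowerSeries.X k) := by
  let φ : ℂ⟦X⟧ →+* MvPowerSeries (Fin r) ℂ :=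
    (substAlgHom (HasSubst.sum_X (univ.filter (j ≤ ·)))).toRingHom.comp (rescale γ)
  have hc : constantCoeff (1 - C ξ * exp ℂ) ≠ 0 := by
    simpa [sub_eq_zero] using hξ.symm
  have hφ : φ (1 - C ξ * exp ℂ) = 1 - MvPowerSeries.C ξ * expShift r j γ := by
    have hC : rescale γ (C ξ) = C ξ := by
      ext n
      rcases eq_or_ne n 0 with rfl | hn <;> simp [coeff_rescale, coeff_C, *]
    simp only [φ, RingHom.comp_apply, map_sub, map_mul, map_one, hC, AlgHom.toRingHom_eq_coe,
      RingHom.coe_coe, coe_substAlgHom, subst_C, expShift_eq_subst]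
  rw [← hφ, MvPowerSeries.inv_map_eq_of_mul_eq_one φ (PowerSeries.mul_inv_cancel _ hc)]
  simp [φ, coe_substAlgHom]

/-- Explicit expression for the depth-two twisted multiple Bernoulli numbers:
`ℬ(k,l;ξ₁,ξ₂;γ₁,γ₂) = Σ_{j=0}^{l} C(l,j)·ℬ_{k+j}(ξ₁)·ℬ_{l−j}(ξ₂)·γ₁^{k+j}·γ₂^{l−j}`. -/
theorem multipleTwistedBernoulli_two (γ₁ γ₂ ξ₁ ξ₂ : ℂ) (h₁ : ξ₁ ≠ 1) (h₂ : ξ₂ ≠ 1)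
    (k l : ℕ) :
    multipleTwistedBernoulli 2 ![ξ₁, ξ₂] ![γ₁, γ₂] ![k, l] =
      ∑ j ∈ Finset.range (l + 1),
        (l.choose j : ℂ) * twistedBernoulli ξ₁ (k + j) * twistedBernoulli ξ₂ (l - j) *
          γ₁ ^ (k + j) * γ₂ ^ (l - j) := by
  have hS₀ : ∑ k ∈ univ.filter ((0 : Fin 2) ≤ ·), MvPowerSeries.X k =
      (MvPowerSeries.X 0 + MvPowerSeries.X 1 : MvPowerSeries (Fin 2) ℂ) := by
    simp [Fin.sum_univ_two]
  have hS₁ : ∑ k ∈ univ.filter ((1 : Fin 2) ≤ ·), MvPowerSeries.X k =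
      (MvPowerSeries.X 1 : MvPowerSeries (Fin 2) ℂ) := by
    rw [show univ.filter ((1 : Fin 2) ≤ ·) = {1} by decide, sum_singleton]
  simp only [multipleTwistedBernoulli, Fin.prod_univ_two, Matrix.cons_val_zero,
    Matrix.cons_val_one, inv_one_sub_C_mul_expShift _ _ h₁,
    inv_one_sub_C_mul_expShift _ _ h₂, hS₀, hS₁, coeff_subst_X_zero_add_X_one_mul_subst_X_one,
    coeff_rescale, mul_sum]
  refine sum_congr rfl fun j hj => ?_
  have hfac : (k.factorial * l.factorial * (k + j).choose k : ℂ) =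
      l.choose j * (k + j).factorial * (l - j).factorial := by
    exact_mod_cast Nat.factorial_mul_factorial_mul_choose_add (mem_range_succ_iff.mp hj)
  simp only [twistedBernoulli]
  linear_combination (coeff (k + j) (1 - C ξ₁ * exp ℂ)⁻¹ * coeff (l - j) (1 - C ξ₂ * exp ℂ)⁻¹ *
    γ₁ ^ (k + j) * γ₂ ^ (l - j)) * hfac
end

section
/- Let r ≥ 1, let c ∈ ℕ with c ≥ 2, and let γ_1,…,γ_r ∈ ℂ. Then in ℂ[[t_1,…,t_r]] one has the identity ∏_{j=1}^r ( Σ_{m≥0} (1 − c^{m+1})·(B_{m+1}/(m+1))·γ_j^m·(t_j+⋯+t_r)^m/m! ) = Σ_{ξ_1,…,ξ_r ∈ μ_c∖{1}} ∏_{j=1}^r (1 − ξ_j·exp(γ_j(t_j+⋯+t_r)))⁻¹, where the sum on the right is over all r-tuples of c-th roots of unity different from 1. -/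
/-- The series `Σ_{m≥0} (1 − c^{m+1})·(B_{m+1}/(m+1))·γ^m·(t_j+⋯+t_r)^m/m!`
in `ℂ[[t_1,…,t_r]]`, defined coefficientwise (the `m`-th summand is homogeneous of
degree `m`, so only `m = |d|` contributes to the coefficient at a monomial `d`). -/
noncomputable def bernoulliFactor (r : ℕ) (j : Fin r) (c : ℕ) (γ : ℂ) :
    MvPowerSeries (Fin r) ℂ :=
  fun d =>
    ((1 - (c : ℂ) ^ ((d.sum fun _ e => e) + 1)) *
        (bernoulli ((d.sum fun _ e => e) + 1) : ℂ) / (((d.sum fun _ e => e) : ℂ) + 1) *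
        γ ^ (d.sum fun _ e => e) / (Nat.factorial (d.sum fun _ e => e) : ℂ)) *
      MvPowerSeries.coeff (R := ℂ) d
        ((∑ k ∈ Finset.univ.filter fun k => j ≤ k, MvPowerSeries.X k) ^ (d.sum fun _ e => e))

/-!
Each factor is the image of a one-variable identity under the substitution
`X ↦ γ_j (t_j + ⋯ + t_r)`, and the product of the sums over the `ξ_j` expands into the sum over
tuples. In one variable write `E = exp X` and let `μ` be the `c`-th roots of unity. From
`P(Y) = ∏_{ξ ∈ μ} (1 - ξY) = 1 - Y^c`, comparing `Y P'(Y)` with `c P(Y)` gives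
`∑_{ξ ∈ μ} ∏_{η ≠ ξ} (1 - ηY) = c`, hence
`(∑_{ξ ≠ 1} (1 - ξE)⁻¹) (1 - E)(1 - E^c) = c (1 - E) - (1 - E^c)`.
Since `B(X) (e^X - 1) = X` for `B(X) = ∑ B_n X^n / n!`, the series
`(B(X) - B(cX)) / X = ∑ (1 - c^{m+1}) B_{m+1}/(m+1) X^m/m!` satisfies the same equation,
and `(1 - E)(1 - E^c)` is a nonzero element of the domain `ℂ[[X]]`.
-/

open Finset

namespace IsPrimitiveRoot

variable {K : Type*} [Field K] {c : ℕ} {ζ : K}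

section
open Polynomial

theorem prod_one_sub_C_mul_X [Infinite K] (hζ : IsPrimitiveRoot ζ c) (hc : 0 < c) :
    ∏ ξ ∈ nthRootsFinset c (1 : K), (1 - C ξ * X) = 1 - X ^ c :=
  Polynomial.funext fun x => by
    simpa [eval_prod] using (hζ.pow_sub_pow_eq_prod_sub_mul 1 x hc).symm

theorem sum_prod_erase_one_sub_C_mul_X [Infinite K] [DecidableEq K] (hζ : IsPrimitiveRoot ζ c)
    (hc : 0 < c) :
    ∑ ξ ∈ nthRootsFinset c (1 : K), ∏ η ∈ (nthRootsFinset c (1 : K)).erase ξ, (1 - C η * X)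
      = (c : K[X]) := by
  set μ := nthRootsFinset c (1 : K)
  have hprod : ∏ ξ ∈ μ, (1 - C ξ * X) = 1 - X ^ c := hζ.prod_one_sub_C_mul_X hc
  have hderiv := congrArg derivative hprod
  simp only [derivative_prod_finset, derivative_sub, derivative_one, derivative_C_mul_X,
    derivative_X_pow, zero_sub, map_natCast] at hderiv
  have hsplit : ∀ ξ ∈ μ, ∏ η ∈ μ.erase ξ, (1 - C η * X)
      = (1 - X ^ c) - (∏ η ∈ μ.erase ξ, (1 - C η * X)) * -C ξ * X :=
    fun ξ hξ => by
      linear_combination (mul_prod_erase _ (fun η => 1 - C η * X) hξ).trans hprod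
  rw [sum_congr rfl hsplit, sum_sub_distrib, ← sum_mul, hderiv, sum_const,
    hζ.card_nthRootsFinset, nsmul_eq_mul]
  linear_combination (c : K[X]) * pow_sub_one_mul hc.ne' (X : K[X])

end

open PowerSeries
open Polynomial (nthRootsFinset one_mem_nthRootsFinset aeval)

theorem sum_inv_one_sub_C_mul_mul [Infinite K] [DecidableEq K] (hζ : IsPrimitiveRoot ζ c)
    (hc : 0 < c) (f : K⟦X⟧)
    (hf : ∀ ξ ∈ (nthRootsFinset c (1 : K)).erase 1, constantCoeff (1 - C ξ * f) ≠ 0) :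
    (∑ ξ ∈ (nthRootsFinset c (1 : K)).erase 1, (1 - C ξ * f)⁻¹) * ((1 - f) * (1 - f ^ c))
      = c * (1 - f) - (1 - f ^ c) := by
  set μ := nthRootsFinset c (1 : K)
  have hprod : ∏ ξ ∈ μ, (1 - C ξ * f) = 1 - f ^ c := by
    simpa [map_prod, algebraMap_eq] using congrArg (aeval f) (hζ.prod_one_sub_C_mul_X hc)
  have hsum : ∑ ξ ∈ μ, ∏ η ∈ μ.erase ξ, (1 - C η * f) = c := by
    simpa [map_prod, algebraMap_eq] using
      congrArg (aeval f) (hζ.sum_prod_erase_one_sub_C_mul_X hc)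
  have hterm : ∀ ξ ∈ μ.erase 1,
      (1 - C ξ * f)⁻¹ * (1 - f ^ c) = ∏ η ∈ μ.erase ξ, (1 - C η * f) := fun ξ hξ => by
    rw [← hprod, ← mul_prod_erase μ (fun η => 1 - C η * f) (mem_of_mem_erase hξ), ← mul_assoc,
      PowerSeries.inv_mul_cancel _ (hf ξ hξ), one_mul]
  have h1 : (1 : K) ∈ μ := one_mem_nthRootsFinset hc
  have hP1 : (1 - f) * ∏ η ∈ μ.erase 1, (1 - C η * f) = 1 - f ^ c := by
    simpa using (mul_prod_erase μ (fun η => 1 - C η * f) h1).trans hprod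
  rw [mul_left_comm, sum_mul, sum_congr rfl hterm, sum_erase_eq_sub h1, hsum]
  linear_combination -hP1

end IsPrimitiveRoot

open PowerSeries

section Bernoulli

variable (K : Type*) [Field K] [CharZero K]

noncomputable def bernoulliDiffQuotient (c : ℕ) : K⟦X⟧ :=
  mk fun n => (1 - (c : K) ^ (n + 1)) * bernoulli (n + 1) / (n + 1) / n.factorial

variable {K}

theorem X_mul_bernoulliDiffQuotient (c : ℕ) :
    X * bernoulliDiffQuotient K c
      = bernoulliPowerSeries K - rescale (c : K) (bernoulliPowerSeries K) := by
  ext (_ | n)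
  · rw [coeff_zero_X_mul, map_sub, coeff_rescale, pow_zero, one_mul, sub_self]
  · rw [coeff_succ_X_mul, bernoulliDiffQuotient, coeff_mk, map_sub, coeff_rescale,
      bernoulliPowerSeries, coeff_mk, eq_ratCast, Nat.factorial_succ]
    push_cast
    field_simp

theorem one_sub_exp_pow_ne_zero {n : ℕ} (hn : n ≠ 0) : (1 : K⟦X⟧) - exp K ^ n ≠ 0 := by
  intro h
  have := congrArg (coeff 1) h
  simp [exp_pow_eq_rescale_exp, coeff_rescale, coeff_exp, hn] at this

theorem bernoulliDiffQuotient_mul (c : ℕ) :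
    bernoulliDiffQuotient K c * ((1 - exp K) * (1 - exp K ^ c))
      = c * (1 - exp K) - (1 - exp K ^ c) := by
  have hB : bernoulliPowerSeries K * (1 - exp K) = -X := by
    linear_combination -bernoulliPowerSeries_mul_exp_sub_one K
  have hBc : rescale (c : K) (bernoulliPowerSeries K) * (1 - exp K ^ c) = -((c : K⟦X⟧) * X) := by
    rw [exp_pow_eq_rescale_exp, ← map_one (rescale (c : K)), ← map_sub, ← map_mul, hB, map_neg,
      rescale_X, map_natCast]
  apply mul_left_cancel₀ (X_ne_zero (R := K))
  linear_combination ((1 - exp K) * (1 - exp K ^ c)) * X_mul_bernoulliDiffQuotient (K := K) c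
    + (1 - exp K ^ c) * hB - (1 - exp K) * hBc

theorem IsPrimitiveRoot.sum_inv_one_sub_C_mul_exp [DecidableEq K] {c : ℕ} {ζ : K}
    (hζ : IsPrimitiveRoot ζ c) (hc : 0 < c) :
    ∑ ξ ∈ (Polynomial.nthRootsFinset c (1 : K)).erase 1, (1 - C ξ * exp K)⁻¹
      = bernoulliDiffQuotient K c := by
  have hne : (1 - exp K) * (1 - exp K ^ c) ≠ 0 :=
    mul_ne_zero (by simpa using one_sub_exp_pow_ne_zero (K := K) one_ne_zero)
      (one_sub_exp_pow_ne_zero hc.ne')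
  refine mul_right_cancel₀ hne ?_
  rw [bernoulliDiffQuotient_mul, hζ.sum_inv_one_sub_C_mul_mul hc]
  intro ξ hξ
  simpa [sub_eq_zero] using (ne_of_mem_erase hξ).symm

end Bernoulli

section Substitution

variable {σ R : Type*} [CommRing R] {p : MvPolynomial σ R}

theorem MvPolynomial.IsHomogeneous.hasSubst (hp : p.IsHomogeneous 1) :
    HasSubst (p : MvPowerSeries σ R) :=
  HasSubst.of_constantCoeff_zero <| by
    rw [← MvPowerSeries.coeff_zero_eq_constantCoeff_apply, MvPolynomial.coeff_coe]
    exact hp.coeff_eq_zero (by simp)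

theorem MvPolynomial.IsHomogeneous.coeff_subst (hp : p.IsHomogeneous 1) (f : R⟦X⟧)
    (d : σ →₀ ℕ) :
    MvPowerSeries.coeff d (subst (p : MvPowerSeries σ R) f)
      = PowerSeries.coeff d.degree f * MvPolynomial.coeff d (p ^ d.degree) := by
  rw [PowerSeries.coeff_subst hp.hasSubst, finsum_eq_single _ d.degree]
  · rw [← MvPolynomial.coe_pow, MvPolynomial.coeff_coe, smul_eq_mul]
  · intro n hn
    rw [← MvPolynomial.coe_pow, MvPolynomial.coeff_coe,
      (hp.pow n).coeff_eq_zero (by rw [one_mul]; exact Ne.symm hn), smul_zero]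

theorem PowerSeries.map_inv_of_constantCoeff_ne_zero {k : Type*} [Field k] {F : Type*}
    [FunLike F k⟦X⟧ (MvPowerSeries σ k)] [RingHomClass F k⟦X⟧ (MvPowerSeries σ k)] (φ : F)
    {f : k⟦X⟧} (hf : constantCoeff f ≠ 0) : φ f⁻¹ = (φ f)⁻¹ := by
  have h : φ f⁻¹ * φ f = 1 := by rw [← map_mul, PowerSeries.inv_mul_cancel _ hf, map_one]
  refine (MvPowerSeries.eq_inv_iff_mul_eq_one ?_).mpr h
  exact right_ne_zero_of_mul_eq_one (by rw [← map_mul, h, map_one])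

end Substitution

theorem Finsupp.sum_eq_degree {σ : Type*} (d : σ →₀ ℕ) : (d.sum fun _ e => e) = d.degree := rfl

noncomputable def scaledTailSum (r : ℕ) (j : Fin r) (γ : ℂ) : MvPolynomial (Fin r) ℂ :=
  γ • ∑ k ∈ Finset.univ.filter fun k => j ≤ k, MvPolynomial.X k

theorem isHomogeneous_scaledTailSum (r : ℕ) (j : Fin r) (γ : ℂ) :
    (scaledTailSum r j γ).IsHomogeneous 1 :=
  (MvPolynomial.homogeneousSubmodule _ ℂ 1).smul_mem γ
    (MvPolynomial.IsHomogeneous.sum _ _ _ fun k _ => MvPolynomial.isHomogeneous_X _ k)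

theorem coeff_scaledTailSum_pow (r : ℕ) (j : Fin r) (γ : ℂ) (m : ℕ) (d : Fin r →₀ ℕ) :
    MvPolynomial.coeff d (scaledTailSum r j γ ^ m) = γ ^ m * MvPowerSeries.coeff d
      ((∑ k ∈ Finset.univ.filter fun k => j ≤ k, MvPowerSeries.X k) ^ m) := by
  rw [scaledTailSum, smul_pow, MvPolynomial.coeff_smul, smul_eq_mul, ← MvPolynomial.coeff_coe,
    MvPolynomial.coe_pow, ← MvPolynomial.coeToMvPowerSeries.ringHom_apply, map_sum]
  simp only [MvPolynomial.coeToMvPowerSeries.ringHom_apply, MvPolynomial.coe_X]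

theorem expShift_eq_subst_s3 (r : ℕ) (j : Fin r) (γ : ℂ) :
    expShift r j γ = subst (scaledTailSum r j γ : MvPowerSeries (Fin r) ℂ) (exp ℂ) := by
  ext d
  rw [(isHomogeneous_scaledTailSum r j γ).coeff_subst, coeff_scaledTailSum_pow, coeff_exp,
    eq_ratCast]
  simp only [expShift, MvPowerSeries.coeff_apply, Finsupp.sum_eq_degree]
  push_cast
  ring

theorem bernoulliFactor_eq_subst (r : ℕ) (j : Fin r) (c : ℕ) (γ : ℂ) :
    bernoulliFactor r j c γ
      = subst (scaledTailSum r j γ : MvPowerSeries (Fin r) ℂ) (bernoulliDiffQuotient ℂ c) := by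
  ext d
  rw [(isHomogeneous_scaledTailSum r j γ).coeff_subst, coeff_scaledTailSum_pow,
    bernoulliDiffQuotient, coeff_mk]
  simp only [bernoulliFactor, MvPowerSeries.coeff_apply, ← Nat.cast_finsupp_sum,
    Finsupp.sum_eq_degree]
  ring

theorem bernoulliFactor_eq_sum_inv (r : ℕ) (j : Fin r) {c : ℕ} (hc : 0 < c) (γ : ℂ) :
    bernoulliFactor r j c γ
      = ∑ ξ ∈ (Polynomial.nthRootsFinset c (1 : ℂ)).erase 1,
          (1 - MvPowerSeries.C ξ * expShift r j γ)⁻¹ := by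
  have hsubst := (isHomogeneous_scaledTailSum r j γ).hasSubst
  rw [bernoulliFactor_eq_subst, expShift_eq_subst_s3, ← coe_substAlgHom hsubst,
    ← (Complex.isPrimitiveRoot_exp c hc.ne').sum_inv_one_sub_C_mul_exp hc, map_sum]
  refine sum_congr rfl fun ξ hξ => ?_
  rw [map_inv_of_constantCoeff_ne_zero, map_sub, map_one, map_mul, ← algebraMap_eq,
    AlgHom.commutes, MvPowerSeries.c_eq_algebraMap]
  simpa [sub_eq_zero] using (ne_of_mem_erase hξ).symm

theorem prod_bernoulliFactor_eq_sum_roots_general (r : ℕ) (c : ℕ) (hc : 2 ≤ c)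
    (γ : Fin r → ℂ) :
    (∏ j, bernoulliFactor r j c (γ j)) =
      ∑ ξ ∈ Fintype.piFinset fun _ : Fin r => (Polynomial.nthRootsFinset c (1 : ℂ)).erase 1,
        ∏ j, (1 - MvPowerSeries.C (σ := Fin r) (R := ℂ) (ξ j) * expShift r j (γ j))⁻¹ := by
  simp_rw [bernoulliFactor_eq_sum_inv r _ (by omega : 0 < c)]
  exact prod_univ_sum _ _

/-- In `ℂ[[t_1,…,t_r]]`:
`∏_{j=1}^r Σ_{m≥0} (1 − c^{m+1})·(B_{m+1}/(m+1))·γ_j^m·(t_j+⋯+t_r)^m/m!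
  = Σ_{ξ_1,…,ξ_r ∈ μ_c∖{1}} ∏_{j=1}^r (1 − ξ_j·exp(γ_j(t_j+⋯+t_r)))⁻¹`. -/
theorem prod_bernoulliFactor_eq_sum_roots (r : ℕ) (hr : 1 ≤ r) (c : ℕ) (hc : 2 ≤ c)
    (γ : Fin r → ℂ) :
    (∏ j, bernoulliFactor r j c (γ j)) =
      ∑ ξ ∈ Fintype.piFinset fun _ : Fin r => (Polynomial.nthRootsFinset c (1 : ℂ)).erase 1,
        ∏ j, (1 - MvPowerSeries.C (σ := Fin r) (R := ℂ) (ξ j) * expShift r j (γ j))⁻¹ :=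
  prod_bernoulliFactor_eq_sum_roots_general r c hc γ
end

section
/- Let p be a prime, let c ∈ ℕ with c ≥ 2 and gcd(c,p) = 1, and let n ∈ ℕ₀. Then Σ_{ρ ∈ μ_p} Σ_{ξ ∈ μ_c, ξ ≠ 1} ℬ_n(ρ·ξ) = p^{n+1}·(1 − c^{n+1})·B_{n+1}/(n+1). (Every product ρ·ξ is different from 1 since μ_p ∩ μ_c = {1} by gcd(c,p) = 1 and ξ ≠ 1.) -/
/-!
Summing `∑_{j<k} (ρ x)^j` over the `k`-th roots of unity `ρ` leaves only the constant term `k`,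
since `∑_ρ ρ^j = 0` unless `k ∣ j`; as `(1 - ρ x) ∑_{j<k} (ρ x)^j = 1 - x^k`, this gives
`∑_ρ 1/(1 - ρ x) = k/(1 - x^k)`. With `x = ξ e^t`, and `e^{pt}` a rescaling of `e^t`, it becomes
`∑_{ρ ∈ μ_p} ℬ_n(ρ ξ) = p^{n+1} ℬ_n(ξ^p)`, and `ξ ↦ ξ^p` permutes `μ_c ∖ {1}`. With `x = e^t`,
where `1 - e^{ct}` is not invertible and is cancelled instead, it becomes
`t ∑_{ξ ∈ μ_c ∖ {1}} 1/(1 - ξ e^t) = B(t) - B(ct)` for `B(t) = t/(e^t - 1)`.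
-/

open Finset
open Polynomial (nthRootsFinset mem_nthRootsFinset one_mem_nthRootsFinset)

section RootsOfUnity

variable {R : Type*} [CommRing R] [IsDomain R]

theorem Polynomial.pow_eq_of_mem_nthRootsFinset {n : ℕ} {a x : R}
    (h : x ∈ nthRootsFinset n a) : x ^ n = a := by
  rcases n.eq_zero_or_pos with rfl | hn
  · simp at h
  · exact (mem_nthRootsFinset hn a).mp h

theorem IsPrimitiveRoot.sum_nthRootsFinset_pow {ζ : R} {k : ℕ} (hζ : IsPrimitiveRoot ζ k)
    (j : ℕ) : ∑ ρ ∈ nthRootsFinset k (1 : R), ρ ^ j = if k ∣ j then (k : R) else 0 := by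
  rcases k.eq_zero_or_pos with rfl | hk
  · simp
  split_ifs with hkj
  · have hρ : ∀ ρ ∈ nthRootsFinset k (1 : R), ρ ^ j = 1 := fun ρ hρ => by
      obtain ⟨i, rfl⟩ := hkj
      rw [pow_mul, Polynomial.pow_eq_of_mem_nthRootsFinset hρ, one_pow]
    rw [sum_congr rfl hρ, sum_const, hζ.card_nthRootsFinset, nsmul_one]
  · -- multiplication by `ζ` permutes the `k`-th roots of unity
    have hshift : ζ ^ j * ∑ ρ ∈ nthRootsFinset k (1 : R), ρ ^ j
        = ∑ ρ ∈ nthRootsFinset k (1 : R), ρ ^ j := by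
      rw [mul_sum]
      refine sum_nbij' (ζ * ·) (ζ ^ (k - 1) * ·) (fun ρ hρ => ?_) (fun ρ hρ => ?_)
        (fun ρ _ => ?_) (fun η _ => ?_) (fun ρ _ => (mul_pow ζ ρ j).symm)
      all_goals simp only [Polynomial.mem_nthRootsFinset hk] at *
      · rw [mul_pow, hζ.pow_eq_one, hρ, one_mul]
      · rw [mul_pow, ← pow_mul, pow_mul', hζ.pow_eq_one, one_pow, hρ, one_mul]
      · rw [← mul_assoc, pow_sub_one_mul hk.ne', hζ.pow_eq_one, one_mul]
      · rw [← mul_assoc, mul_pow_sub_one hk.ne', hζ.pow_eq_one, one_mul]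
    have hζj : ζ ^ j ≠ 1 := by rwa [Ne, hζ.pow_eq_one_iff_dvd]
    exact (mul_left_eq_self₀.mp hshift).resolve_left hζj

theorem Nat.Coprime.exists_pow_pow_eq_self {M : Type*} [Monoid M] {c p : ℕ}
    (hcp : c.Coprime p) : ∃ m : ℕ, ∀ x : M, x ^ c = 1 → (x ^ p) ^ m = x := by
  rcases eq_or_ne c 0 with rfl | hc
  · exact ⟨1, fun x _ => by rw [(Nat.coprime_zero_left p).mp hcp, pow_one, pow_one]⟩
  obtain ⟨m, -, hm⟩ := Nat.exists_mul_mod_eq_of_coprime 1 hcp.symm hc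
  exact ⟨m, fun x hx => by rw [← pow_mul, pow_eq_pow_mod _ hx, hm, ← pow_eq_pow_mod _ hx, pow_one]⟩

theorem sum_erase_one_nthRootsFinset_comp_pow [DecidableEq R] {M : Type*} [AddCommMonoid M]
    {c p : ℕ} (hcp : c.Coprime p) (f : R → M) :
    ∑ ξ ∈ (nthRootsFinset c (1 : R)).erase 1, f (ξ ^ p) =
      ∑ ξ ∈ (nthRootsFinset c (1 : R)).erase 1, f ξ := by
  rcases c.eq_zero_or_pos with rfl | hc
  · simp
  obtain ⟨m, hm⟩ := hcp.exists_pow_pow_eq_self (M := R)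
  have hm' : ∀ x : R, x ^ c = 1 → (x ^ m) ^ p = x := fun x hx => by
    rw [← pow_mul, mul_comm, pow_mul, hm x hx]
  refine sum_nbij' (· ^ p) (· ^ m) (fun ξ hξ => ?_) (fun ξ hξ => ?_) (fun ξ hξ => ?_)
    (fun ξ hξ => ?_) (fun _ _ => rfl)
  all_goals simp only [mem_erase, mem_nthRootsFinset hc] at *
  · refine ⟨fun h => hξ.1 ?_, by rw [← pow_mul, mul_comm, pow_mul, hξ.2, one_pow]⟩
    rw [← hm ξ hξ.2, h, one_pow]
  · refine ⟨fun h => hξ.1 ?_, by rw [← pow_mul, mul_comm, pow_mul, hξ.2, one_pow]⟩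
    rw [← hm' ξ hξ.2, h, one_pow]
  · exact hm ξ hξ.2
  · exact hm' ξ hξ.2

end RootsOfUnity

namespace PowerSeries

theorem rescale_C {R : Type*} [CommSemiring R] (a b : R) : rescale a (C b) = C b := by
  ext n
  rw [coeff_rescale, coeff_C]
  split_ifs with h <;> simp [h]

theorem sum_nthRootsFinset_geom_sum_C_mul {R : Type*} [CommRing R] [IsDomain R] {ζ : R} {k : ℕ}
    (hζ : IsPrimitiveRoot ζ k) (f : R⟦X⟧) :
    ∑ ρ ∈ nthRootsFinset k (1 : R), ∑ j ∈ range k, (C ρ * f) ^ j = C (k : R) := by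
  simp_rw [sum_comm (s := nthRootsFinset k (1 : R)), mul_pow, ← map_pow, ← sum_mul, ← map_sum,
    hζ.sum_nthRootsFinset_pow]
  rw [sum_eq_single 0 (fun j hj hj0 => ?_) (fun h0 => ?_)]
  · simp
  · rw [if_neg (fun hkj => hj0 (Nat.eq_zero_of_dvd_of_lt hkj (mem_range.mp hj))), map_zero,
      zero_mul]
  · rw [mem_range, Nat.pos_iff_ne_zero, not_not] at h0
    simp [h0]

variable {K : Type*} [Field K]

theorem rescale_inv (a : K) (φ : K⟦X⟧) : rescale a φ⁻¹ = (rescale a φ)⁻¹ := by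
  have hconst : constantCoeff (rescale a φ) = constantCoeff φ := by
    rw [← coeff_zero_eq_constantCoeff_apply, coeff_rescale, pow_zero, one_mul,
      coeff_zero_eq_constantCoeff_apply]
  by_cases hφ : constantCoeff φ = 0
  · rw [inv_eq_zero.mpr hφ, inv_eq_zero.mpr (hconst ▸ hφ), map_zero]
  · rw [eq_inv_iff_mul_eq_one (hconst ▸ hφ), ← map_mul, PowerSeries.inv_mul_cancel φ hφ, map_one]

theorem one_sub_pow_mul_inv_one_sub_C_mul {ρ : K} {k : ℕ} (hρ : ρ ^ k = 1) (f : K⟦X⟧)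
    (hf : ρ * constantCoeff f ≠ 1) :
    (1 - f ^ k) * (1 - C ρ * f)⁻¹ = ∑ j ∈ range k, (C ρ * f) ^ j := by
  have hconst : constantCoeff (1 - C ρ * f) ≠ 0 := by simpa [sub_eq_zero] using hf.symm
  have hpow : f ^ k = (C ρ * f) ^ k := by rw [mul_pow, ← map_pow, hρ, map_one, one_mul]
  rw [hpow, ← mul_neg_geom_sum, mul_right_comm, PowerSeries.mul_inv_cancel _ hconst, one_mul]

theorem sum_nthRootsFinset_inv_one_sub_C_mul {ζ : K} {k : ℕ} (hζ : IsPrimitiveRoot ζ k)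
    (f : K⟦X⟧) (hf : constantCoeff f ^ k ≠ 1) :
    ∑ ρ ∈ nthRootsFinset k (1 : K), (1 - C ρ * f)⁻¹ = C (k : K) * (1 - f ^ k)⁻¹ := by
  have hconst : constantCoeff (1 - f ^ k) ≠ 0 := by simpa [sub_eq_zero] using hf.symm
  have hterm : ∀ ρ ∈ nthRootsFinset k (1 : K),
      (1 - C ρ * f)⁻¹ = (1 - f ^ k)⁻¹ * ∑ j ∈ range k, (C ρ * f) ^ j := fun ρ hρ => by
    have hρk : ρ ^ k = 1 := Polynomial.pow_eq_of_mem_nthRootsFinset hρ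
    have hρf : ρ * constantCoeff f ≠ 1 := fun h => hf <| by
      simpa [mul_pow, hρk] using congrArg (· ^ k) h
    rw [← one_sub_pow_mul_inv_one_sub_C_mul hρk f hρf, ← mul_assoc,
      PowerSeries.inv_mul_cancel _ hconst, one_mul]
  rw [sum_congr rfl hterm, ← mul_sum, sum_nthRootsFinset_geom_sum_C_mul hζ, mul_comm]

theorem X_mul_sum_inv_one_sub_C_mul_exp [CharZero K] [DecidableEq K] {ζ : K} {c : ℕ}
    (hζ : IsPrimitiveRoot ζ c) (hc : c ≠ 0) :
    X * ∑ ξ ∈ (nthRootsFinset c (1 : K)).erase 1, (1 - C ξ * exp K)⁻¹ =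
      bernoulliPowerSeries K - rescale (c : K) (bernoulliPowerSeries K) := by
  set E := exp K
  set B := bernoulliPowerSeries K
  have hEc : E ^ c = rescale (c : K) E := exp_pow_eq_rescale_exp c
  have hne : (1 - E ^ c : K⟦X⟧) ≠ 0 := fun h => by
    simpa [hEc, coeff_rescale, E, coeff_one, hc] using congrArg (coeff 1) h
  have hsum : (1 - E ^ c) * ∑ ξ ∈ (nthRootsFinset c (1 : K)).erase 1, (1 - C ξ * E)⁻¹ =
      C (c : K) - ∑ j ∈ range c, E ^ j := by
    rw [mul_sum, sum_congr rfl fun ξ hξ => one_sub_pow_mul_inv_one_sub_C_mul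
      (Polynomial.pow_eq_of_mem_nthRootsFinset (mem_of_mem_erase hξ)) E
      (by simpa [E] using ne_of_mem_erase hξ), ← sum_nthRootsFinset_geom_sum_C_mul hζ E,
      ← sum_erase_add _ _ (one_mem_nthRootsFinset (Nat.pos_of_ne_zero hc))]
    simp
  have hB : B * (1 - E ^ c) = -(X * ∑ j ∈ range c, E ^ j) := by
    linear_combination B * geom_sum_mul E c -
      (∑ j ∈ range c, E ^ j) * bernoulliPowerSeries_mul_exp_sub_one K
  have hBc : rescale (c : K) B * (1 - E ^ c) = -(C (c : K) * X) := by
    rw [hEc, ← map_one (rescale (c : K)), ← map_sub, ← map_mul, ← rescale_X, ← map_neg]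
    congr 1
    linear_combination -bernoulliPowerSeries_mul_exp_sub_one K
  refine mul_left_cancel₀ hne ?_
  linear_combination X * hsum - hB + hBc

end PowerSeries

open PowerSeries

theorem sum_nthRootsFinset_twistedBernoulli_mul {k : ℕ} (hk : k ≠ 0) {ξ : ℂ} (hξ : ξ ^ k ≠ 1)
    (n : ℕ) : ∑ ρ ∈ nthRootsFinset k (1 : ℂ), twistedBernoulli (ρ * ξ) n =
      (k : ℂ) ^ (n + 1) * twistedBernoulli (ξ ^ k) n := by
  have hsum := sum_nthRootsFinset_inv_one_sub_C_mul (Complex.isPrimitiveRoot_exp k hk)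
    (C ξ * exp ℂ) (by simpa using hξ)
  have hrescale : 1 - (C ξ * exp ℂ) ^ k = rescale (k : ℂ) (1 - C (ξ ^ k) * exp ℂ) := by
    rw [mul_pow, ← map_pow, exp_pow_eq_rescale_exp, map_sub, map_one, map_mul, rescale_C]
  rw [hrescale, ← rescale_inv] at hsum
  have hterm : ∀ ρ : ℂ, C (ρ * ξ) * exp ℂ = C ρ * (C ξ * exp ℂ) := fun ρ => by
    rw [map_mul, mul_assoc]
  simp only [twistedBernoulli, hterm, ← mul_sum, ← map_sum, hsum, coeff_C_mul, coeff_rescale]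
  ring

theorem sum_erase_one_nthRootsFinset_twistedBernoulli {c : ℕ} (hc : c ≠ 0) (n : ℕ) :
    ∑ ξ ∈ (nthRootsFinset c (1 : ℂ)).erase 1, twistedBernoulli ξ n =
      (1 - (c : ℂ) ^ (n + 1)) * bernoulli (n + 1) / (n + 1) := by
  have h := congrArg (coeff (n + 1))
    (X_mul_sum_inv_one_sub_C_mul_exp (Complex.isPrimitiveRoot_exp c hc) hc)
  simp only [coeff_succ_X_mul, map_sum, map_sub, coeff_rescale, bernoulliPowerSeries, eq_ratCast,
    coeff_mk] at h
  have hfac : (n.factorial : ℂ) ≠ 0 := Nat.cast_ne_zero.mpr n.factorial_ne_zero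
  simp only [twistedBernoulli, ← mul_sum, h, Nat.factorial_succ]
  push_cast
  field_simp

theorem sum_sum_twistedBernoulli_general (p : ℕ) (c : ℕ) (hc : 2 ≤ c)
    (hcp : Nat.Coprime c p) (n : ℕ) :
    ∑ ρ ∈ Polynomial.nthRootsFinset p (1 : ℂ),
        ∑ ξ ∈ (Polynomial.nthRootsFinset c (1 : ℂ)).erase 1, twistedBernoulli (ρ * ξ) n
      = (p : ℂ) ^ (n + 1) * (1 - (c : ℂ) ^ (n + 1)) * (bernoulli (n + 1) : ℂ) /
          ((n : ℂ) + 1) := by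
  have hp : p ≠ 0 := by
    rintro rfl
    have := (Nat.coprime_zero_right c).mp hcp
    omega
  have hξp : ∀ ξ ∈ (nthRootsFinset c (1 : ℂ)).erase 1, ξ ^ p ≠ 1 := fun ξ hξ hξp =>
    ne_of_mem_erase hξ <| (pow_eq_one_iff_of_coprime hcp).mp
      ⟨Polynomial.pow_eq_of_mem_nthRootsFinset (mem_of_mem_erase hξ), hξp⟩
  rw [sum_comm, sum_congr rfl fun ξ hξ => sum_nthRootsFinset_twistedBernoulli_mul hp (hξp ξ hξ) n,
    ← mul_sum, sum_erase_one_nthRootsFinset_comp_pow hcp (twistedBernoulli · n),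
    sum_erase_one_nthRootsFinset_twistedBernoulli (by omega)]
  ring

/-- For a prime `p` and `c ≥ 2` coprime to `p`:
`Σ_{ρ ∈ μ_p} Σ_{ξ ∈ μ_c, ξ ≠ 1} ℬ_n(ρ·ξ) = p^{n+1}·(1 − c^{n+1})·B_{n+1}/(n+1)`. -/
theorem sum_sum_twistedBernoulli (p : ℕ) (hp : p.Prime) (c : ℕ) (hc : 2 ≤ c)
    (hcp : Nat.Coprime c p) (n : ℕ) :
    ∑ ρ ∈ Polynomial.nthRootsFinset p (1 : ℂ),
        ∑ ξ ∈ (Polynomial.nthRootsFinset c (1 : ℂ)).erase 1, twistedBernoulli (ρ * ξ) n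
      = (p : ℂ) ^ (n + 1) * (1 - (c : ℂ) ^ (n + 1)) * (bernoulli (n + 1) : ℂ) /
          ((n : ℂ) + 1) :=
  sum_sum_twistedBernoulli_general p c hc hcp n
end
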